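/- Let (C, J, P) be a geometric context and let S be a class of morphisms of C satisfying: (1) S is stable under base change (in any cartesian square in C the pullback of a morphism in S lies in S); (2) S is J-local (if φ : U → V admits a J-covering (ρ_i : U_i → U) with every ρ_i ∈ P and every φ∘ρ_i ∈ S, then φ ∈ S); (3) S is locally cartesian (for every φ : U → V in S there exists a J-covering (ρ_i : U_i → U) with each ρ_i a monomorphism lying in P, such that each composite φ∘ρ_i lies in S and is a cartesian morphism). Then a morphism φ : U → V of C lies in S if, and only if, h_φ : h_U → h_V is an S-morphism of sheaves. -/

import Mathlib

open CategoryTheory CategoryTheory.Limits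

universe u

namespace GeomCtx

variable {C : Type u} [SmallCategory C]

/-- An arrow `f` of a category is *cartesian* if pullbacks of arbitrary morphisms
along `f` exist. -/
def CartesianArrow {X Y : C} (f : X ⟶ Y) : Prop :=
  ∀ ⦃Z : C⦄ (g : Z ⟶ Y), HasPullback f g

/-- A family of arrows `(ρ i : Ui i ⟶ X)` is a `J`-covering if the sieve it
generates is a `J`-covering sieve. -/
def IsJCover (J : GrothendieckTopology C) {X : C} {I : Type u} (Ui : I → C)
    (ρ : ∀ i, Ui i ⟶ X) : Prop :=
  Sieve.generate (Presieve.ofArrows Ui ρ) ∈ J X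

/-- A Grothendieck pretopology (in the sense that does not presuppose the existence of
all pullbacks in `C`): a collection of covering families consisting of cartesian arrows,
stable under pullback, transitive, and containing the isomorphisms. -/
structure IsPretopology (Cov : ∀ U : C, Set (Presieve U)) : Prop where
  cartesian : ∀ ⦃U : C⦄, ∀ R ∈ Cov U, ∀ ⦃V : C⦄ (f : V ⟶ U), R f → CartesianArrow f
  pullback_stable : ∀ ⦃U V : C⦄ (g : V ⟶ U), ∀ R ∈ Cov U,
    ∃ S ∈ Cov V, ∀ ⦃W : C⦄ (f : W ⟶ V), S f →
      ∃ (Z : C) (r : Z ⟶ U) (h : W ⟶ Z), R r ∧ IsPullback h f r g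
  trans : ∀ ⦃U : C⦄ (R : Presieve U), R ∈ Cov U →
    ∀ (T : ∀ ⦃V : C⦄ ⦃f : V ⟶ U⦄, R f → Presieve V),
      (∀ ⦃V : C⦄ ⦃f : V ⟶ U⦄ (hf : R f), T hf ∈ Cov V) →
      R.bind T ∈ Cov U
  has_isos : ∀ ⦃U V : C⦄ (f : V ⟶ U) [IsIso f], Presieve.singleton f ∈ Cov U

/-- A Grothendieck topology is generated by a pretopology if its covering sieves are
exactly the sieves containing a sieve generated by a covering family of the pretopology. -/
def GeneratedByPretopology (J : GrothendieckTopology C) : Prop :=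
  ∃ Cov : ∀ U : C, Set (Presieve U), IsPretopology Cov ∧
    ∀ (U : C) (S : Sieve U), S ∈ J U ↔ ∃ R ∈ Cov U, Sieve.generate R ≤ S

/-- A *geometric context* `(C, J, P)`: a small category `C` with finite products, a
subcanonical Grothendieck topology `J` generated by a pretopology, and an admissible
class `P` of arrows of `C` which is `J`-local and locally cartesian, and such that `J`
is `P`-generated. -/
structure IsGeometricContext (J : GrothendieckTopology C) (P : MorphismProperty C) : Prop where
  /-- (GC1) `C` admits finite products. -/
  hasFiniteProducts : HasFiniteProducts C
  /-- (GC2a) `J` is subcanonical: every representable presheaf is a `J`-sheaf. -/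
  subcanonical : ∀ U : C, Presheaf.IsSheaf J (yoneda.obj U)
  /-- (GC2b) `J` is generated by a Grothendieck pretopology. -/
  pretopologyGenerated : GeneratedByPretopology J
  /-- (GC3a) `P` contains all identities. -/
  id_mem : ∀ U : C, P (𝟙 U)
  /-- (GC3b) `P` is stable under base change. -/
  stableUnderBaseChange : ∀ ⦃U' V' U V : C⦄ (f' : U' ⟶ V') (g' : U' ⟶ U)
    (g : V' ⟶ V) (f : U ⟶ V), IsPullback f' g' g f → P f → P f'
  /-- (GC3c) `P` is stable under composition. -/
  stableUnderComposition : ∀ ⦃U V W : C⦄ (f : U ⟶ V) (g : V ⟶ W), P f → P g → P (f ≫ g)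
  /-- (GC4) `P` is `J`-local. -/
  jLocal : ∀ ⦃U V : C⦄ (φ : U ⟶ V) ⦃I : Type u⦄ (Ui : I → C) (ρ : ∀ i, Ui i ⟶ U),
    IsJCover J Ui ρ → (∀ i, P (ρ i)) → (∀ i, P (ρ i ≫ φ)) → P φ
  /-- (GC5) `J` is `P`-generated: every `J`-covering admits a `P`-refinement. -/
  pGenerated : ∀ ⦃U : C⦄ ⦃A : Type u⦄ (Ua : A → C) (ρ : ∀ a, Ua a ⟶ U),
    IsJCover J Ua ρ → ∃ (I : Type u) (Vi : I → C) (φ : ∀ i, Vi i ⟶ U),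
      (∀ i, P (φ i)) ∧ ∀ a, ∃ (i : I) (g : Ua a ⟶ Vi i), g ≫ φ i = ρ a
  /-- (GC6) `P` is locally cartesian. -/
  locallyCartesian : ∀ ⦃U V : C⦄ (φ : U ⟶ V), P φ →
    ∃ (I : Type u) (Ui : I → C) (ρ : ∀ i, Ui i ⟶ U),
      IsJCover J Ui ρ ∧ (∀ i, P (ρ i)) ∧ ∀ i, CartesianArrow (ρ i ≫ φ)

variable (J : GrothendieckTopology C)

instance sheafHasColimitsOfShapeDiscrete (I : Type u) :
    HasColimitsOfShape (Discrete I) (Sheaf J (Type u)) :=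
  Sheaf.instHasColimitsOfShape

/-- `Subcanonicity` of `J`, phrased concretely. -/
abbrev Subcanonical : Prop := ∀ U : C, Presheaf.IsSheaf J (yoneda.obj U)

/-- The sheaf represented by an object `U` of `C` (for a subcanonical topology). -/
def yo (hs : Subcanonical J) (U : C) : Sheaf J (Type u) :=
  ⟨yoneda.obj U, hs U⟩

/-- The morphism of representable sheaves induced by a morphism of `C`. -/
def yoMap (hs : Subcanonical J) {U V : C} (f : U ⟶ V) : yo J hs U ⟶ yo J hs V :=
  ⟨yoneda.map f⟩

/-- Two morphisms `f : A ⟶ X` and `g : B ⟶ X` of sheaves have the same image, as a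
subobject of `X`: there is a common monomorphism into `X` through which both factor
epimorphically. -/
def SameImage {A B X : Sheaf J (Type u)} (f : A ⟶ X) (g : B ⟶ X) : Prop :=
  ∃ (W : Sheaf J (Type u)) (i : W ⟶ X) (p : A ⟶ W) (q : B ⟶ W),
    Mono i ∧ Epi p ∧ Epi q ∧ p ≫ i = f ∧ q ≫ i = g

variable (P : MorphismProperty C)

/-- A morphism of sheaves `f : F ⟶ H` is an *open immersion* if for every `U : C` and
every morphism `g : h_U ⟶ H`, the projection `F ×_H h_U ⟶ h_U` is a monomorphism and
there is a family of `P`-morphisms `(Ui i ⟶ U)` such that the image of the induced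
morphism `∐ h_{Ui i} ⟶ h_U` coincides, as a subobject of `h_U`, with the image of
`F ×_H h_U ⟶ h_U`. -/
def IsOpenImmersion (hs : Subcanonical J) {F H : Sheaf J (Type u)} (f : F ⟶ H) : Prop :=
  ∀ (U : C) (g : yo J hs U ⟶ H),
    Mono (pullback.snd f g) ∧
    ∃ (I : Type u) (Ui : I → C) (ρ : ∀ i, Ui i ⟶ U),
      (∀ i, P (ρ i)) ∧
      SameImage J (Limits.Sigma.desc fun i => yoMap J hs (ρ i)) (pullback.snd f g)

/-- An *open atlas* of a sheaf `X`: a family of open immersions from representable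
sheaves which is jointly epimorphic. A sheaf admitting an open atlas is an
*elementary scheme*. -/
def IsElementaryScheme (hs : Subcanonical J) (X : Sheaf J (Type u)) : Prop :=
  ∃ (I : Type u) (Ui : I → C) (p : ∀ i, yo J hs (Ui i) ⟶ X),
    (∀ i, IsOpenImmersion J P hs (p i)) ∧ Epi (Limits.Sigma.desc p)

/-- A morphism of sheaves `f : F ⟶ H` is an *`S`-morphism* if for every `U : C` and
every `g : h_U ⟶ H` there is an open atlas `∐ h_{Ui i} ⟶ F ×_H h_U` such that each
induced composite `Ui i ⟶ U` (viewed in `C` via the Yoneda embedding) lies in `S`. -/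
def IsSMorphism (hs : Subcanonical J) (S : MorphismProperty C)
    {F H : Sheaf J (Type u)} (f : F ⟶ H) : Prop :=
  ∀ (U : C) (g : yo J hs U ⟶ H),
    ∃ (I : Type u) (Ui : I → C) (p : ∀ i, yo J hs (Ui i) ⟶ pullback f g),
      (∀ i, IsOpenImmersion J P hs (p i)) ∧ Epi (Limits.Sigma.desc p) ∧
      ∀ i, ∃ ρ : Ui i ⟶ U, yoMap J hs ρ = p i ≫ pullback.snd f g ∧ S ρ

/-- A morphism of sheaves `f : F ⟶ H` is *schematic* if for every `U : C` and every
`g : h_U ⟶ H` the pullback `F ×_H h_U` is an elementary scheme. -/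
def IsSchematic (hs : Subcanonical J) {F H : Sheaf J (Type u)} (f : F ⟶ H) : Prop :=
  ∀ (U : C) (g : yo J hs U ⟶ H), IsElementaryScheme J P hs (pullback f g)

end GeomCtx


namespace GeomCtx

open Opposite

variable {C : Type u} [SmallCategory C]
variable (J : GrothendieckTopology C) (hs : Subcanonical J)

lemma yoMap_comp {U V W : C} (f : U ⟶ V) (g : V ⟶ W) :
    yoMap J hs (f ≫ g) = yoMap J hs f ≫ yoMap J hs g := by
  apply Sheaf.hom_ext
  simp [yoMap]
  rfl

lemma yoMap_injective {U V : C} {f g : U ⟶ V} (h : yoMap J hs f = yoMap J hs g) : f = g := by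
  apply yoneda.map_injective
  exact Sheaf.hom_ext_iff.1 h

noncomputable def yoPreimage {U V : C} (g : yo J hs U ⟶ yo J hs V) : U ⟶ V :=
  yoneda.preimage g.hom

lemma yoMap_yoPreimage {U V : C} (g : yo J hs U ⟶ yo J hs V) :
    yoMap J hs (yoPreimage J hs g) = g := by
  apply Sheaf.hom_ext
  simp [yoMap, yoPreimage]
  exact yoneda.map_preimage g.hom

lemma mono_yoMap {U V : C} (f : U ⟶ V) [Mono f] : Mono (yoMap J hs f) := by
  have : Mono (yoneda.map f) := yoneda.map_mono f
  exact (sheafToPresheaf J (Type u)).mono_of_mono_map (by exact this)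

lemma isPullback_yoMap {P X Y Z : C} {a : P ⟶ X} {b : P ⟶ Y} {f : X ⟶ Z} {g : Y ⟶ Z}
    (h : IsPullback a b f g) :
    IsPullback (yoMap J hs a) (yoMap J hs b) (yoMap J hs f) (yoMap J hs g) := by
  have hp : IsPullback (yoneda.map a) (yoneda.map b) (yoneda.map f) (yoneda.map g) :=
    h.map yoneda
  apply IsPullback.of_map (sheafToPresheaf J (Type u))
  · rw [← yoMap_comp, ← yoMap_comp, h.w]
  · exact hp

lemma isPullback_of_comp_mono {A B X : C} (c : A ⟶ B) (σ : B ⟶ X) (hm : Mono σ) :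
    IsPullback c (𝟙 A) σ (c ≫ σ) := by
  have w : c ≫ σ = 𝟙 A ≫ (c ≫ σ) := by simp
  refine IsPullback.of_isLimit (PullbackCone.IsLimit.mk w (fun s => s.snd) ?_ ?_ ?_)
  · intro s
    refine ((cancel_mono σ).1 ?_).symm
    rw [Category.assoc, ← s.condition]
  · intro s
    simp
  · intro s m hm1 hm2
    simpa using hm2

lemma exists_of_generate {X : C} {I : Type u} {A : I → C} {c : ∀ i, A i ⟶ X} {Z : C}
    {t : Z ⟶ X} (h : (Sieve.generate (Presieve.ofArrows A c)).arrows t) :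
    ∃ (i : I) (w : Z ⟶ A i), w ≫ c i = t := by
  obtain ⟨Y, h', f', hf', rfl⟩ := h
  cases hf' with
  | mk i => exact ⟨i, h', rfl⟩

lemma yonedaEquiv_map_comp {Z A : C} (w : Z ⟶ A) {F : Cᵒᵖ ⥤ Type u}
    (φ : yoneda.obj A ⟶ F) : yonedaEquiv (yoneda.map w ≫ φ) = φ.app (op Z) w := by
  rw [yonedaEquiv_comp, yonedaEquiv_yoneda_map]

lemma epi_desc_of_locally_factors (G : Sheaf J (Type u)) {I : Type u} (A : I → C)
    (k : ∀ i, yo J hs (A i) ⟶ G)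
    (H : ∀ (Y : C) (s : yo J hs Y ⟶ G), ∃ T : Sieve Y, T ∈ J Y ∧
      ∀ ⦃Z : C⦄ ⦃t : Z ⟶ Y⦄, T.arrows t → ∃ (i : I) (w : Z ⟶ A i),
        yoMap J hs w ≫ k i = yoMap J hs t ≫ s) :
    Epi (Sigma.desc k) := by
  have : Sheaf.IsLocallySurjective (Sigma.desc k) := by
    constructor
    intro Y s'
    set s : yo J hs Y ⟶ G := ⟨yonedaEquiv.symm s'⟩ with hsdef
    obtain ⟨T, hT, hH⟩ := H Y s
    refine J.superset_covering ?_ hT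
    rintro Z t ht
    obtain ⟨i, w, hw⟩ := hH ht
    refine ⟨(Sigma.ι (fun i => yo J hs (A i)) i).hom.app (op Z) w, ?_⟩
    have h1 : (Sigma.desc k).hom.app (op Z) ((Sigma.ι (fun i => yo J hs (A i)) i).hom.app (op Z) w)
        = (k i).hom.app (op Z) w := by
      have := Sigma.ι_desc (f := fun i => yo J hs (A i)) k i
      have := congrArg InducedCategory.Hom.hom this
      exact congrArg (fun (α : _ ⟶ G.val) => α.app (op Z) w) this
    have h2 : (k i).hom.app (op Z) w = yonedaEquiv (yoneda.map w ≫ (k i).hom) :=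
      (yonedaEquiv_map_comp w (k i).hom).symm
    have h3 : G.val.map t.op s' = yonedaEquiv (yoneda.map t ≫ s.hom) := by
      have : yonedaEquiv s.hom = s' := by simp [hsdef]
      rw [← this, yonedaEquiv_naturality]
    have hfinal : (k i).hom.app (op Z) w = G.val.map t.op s' := by
      rw [h2, h3]
      congr 1
      exact congrArg InducedCategory.Hom.hom hw
    exact h1.trans hfinal
  exact inferInstance

lemma isJCover_of_epi_desc {X : C} {I : Type u} (A : I → C) (c : ∀ i, A i ⟶ X)
    (h : Epi (Sigma.desc (fun i => yoMap J hs (c i)))) : IsJCover J A c := by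
  classical
  set T := Sieve.generate (Presieve.ofArrows A c) with hTdef
  set Gsub : Subfunctor (yoneda.obj X) :=
    { obj := fun Z => { f | T.arrows f }
      map := fun g x hx => T.downward_closed hx _ } with hGdef
  have hXsheaf : Presieve.IsSheaf J (yoneda.obj X) :=
    (isSheaf_iff_isSheaf_of_type _ _).1 (hs X)
  set Gsh := Gsub.sheafify J with hGshdef
  set W : Sheaf J (Type u) :=
    ⟨Gsh.toFunctor, (isSheaf_iff_isSheaf_of_type _ _).2
      (Gsub.sheafify_isSheaf hXsheaf)⟩ with hWdef
  set m : W ⟶ yo J hs X := ⟨Gsh.ι⟩ with hmdef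
  have hlift : ∀ i : I, ∃ l : yo J hs (A i) ⟶ W, l ≫ m = yoMap J hs (c i) := by
    intro i
    have hmem : ∀ (Z : Cᵒᵖ) (x : (yoneda.obj (A i)).obj Z),
        (yoneda.map (c i)).app Z x ∈ Gsh.obj Z := by
      intro Z x
      apply Gsub.le_sheafify J
      exact ⟨A i, x, c i, Presieve.ofArrows.mk i, rfl⟩
    refine ⟨⟨Gsh.lift (yoneda.map (c i)) (by rintro Z _ ⟨x, rfl⟩; exact hmem Z x)⟩, ?_⟩
    apply Sheaf.hom_ext
    exact Gsh.lift_ι _ (by rintro Z _ ⟨x, rfl⟩; exact hmem Z x)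
  choose l hl using hlift
  have hfac : Sigma.desc (fun i => yoMap J hs (c i)) = Sigma.desc l ≫ m := by
    apply Sigma.hom_ext
    intro i
    simp [hl]
  have hEpi_m : Epi m := by
    rw [hfac] at h
    exact epi_of_epi (Sigma.desc l) m
  have hls : Sheaf.IsLocallySurjective m := by
    rwa [Sheaf.isLocallySurjective_iff_epi]
  have him : Presheaf.imageSieve m.hom (𝟙 X : (yoneda.obj X).obj (op X)) ∈ J X :=
    Presheaf.imageSieve_mem J m.hom _
  refine J.transitive him T ?_
  rintro Z f ⟨⟨z, hzmem⟩, hz⟩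
  have hz1 : z = f := by
    have h2 : z = f ≫ 𝟙 X := hz
    simpa using h2
  subst hz1
  have hz2 : Gsub.sieveOfSection z ∈ J Z := hzmem
  refine J.superset_covering ?_ hz2
  intro Z' g hg
  exact hg

end GeomCtx

open GeomCtx in
/-- Let `S` be a class of arrows of `C`, stable under base change, `J`-local and
locally cartesian (with covers consisting of `P`-monomorphisms). Then `φ : U ⟶ V`
lies in `S` iff `h_φ : h_U ⟶ h_V` is an `S`-morphism of sheaves. -/
theorem statement8 {C : Type u} [SmallCategory C] (J : GrothendieckTopology C)
    (P : MorphismProperty C) (hGC : IsGeometricContext J P)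
    (S : MorphismProperty C)
    (h1 : ∀ ⦃U' V' U V : C⦄ (f' : U' ⟶ V') (g' : U' ⟶ U) (g : V' ⟶ V) (f : U ⟶ V),
      IsPullback f' g' g f → S f → S f')
    (h2 : ∀ ⦃U V : C⦄ (φ : U ⟶ V) ⦃I : Type u⦄ (Ui : I → C) (ρ : ∀ i, Ui i ⟶ U),
      IsJCover J Ui ρ → (∀ i, P (ρ i)) → (∀ i, S (ρ i ≫ φ)) → S φ)
    (h3 : ∀ ⦃U V : C⦄ (φ : U ⟶ V), S φ →
      ∃ (I : Type u) (Ui : I → C) (ρ : ∀ i, Ui i ⟶ U),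
        IsJCover J Ui ρ ∧ (∀ i, Mono (ρ i)) ∧ (∀ i, P (ρ i)) ∧
        (∀ i, S (ρ i ≫ φ)) ∧ (∀ i, CartesianArrow (ρ i ≫ φ)))
    {U V : C} (φ : U ⟶ V) :
    S φ ↔ IsSMorphism J P hGC.subcanonical S (yoMap J hGC.subcanonical φ) := by
  classical
  set hs := hGC.subcanonical with hhs
  constructor
  · -- forward direction
    intro hS
    intro U' g
    obtain ⟨ψ, rfl⟩ : ∃ ψ : U' ⟶ V, yoMap J hs ψ = g := ⟨_, yoMap_yoPreimage J hs g⟩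
    obtain ⟨I, Ui, ρ, hcov, hmonoρ, hPρ, hSρφ, hcart⟩ := h3 φ hS
    haveI : ∀ i, HasPullback (ρ i ≫ φ) ψ := fun i => hcart i ψ
    set Wi : I → C := fun i => Limits.pullback (ρ i ≫ φ) ψ with hWidef
    set w1 : ∀ i, Wi i ⟶ Ui i := fun i => pullback.fst (ρ i ≫ φ) ψ with hw1def
    set w2 : ∀ i, Wi i ⟶ U' := fun i => pullback.snd (ρ i ≫ φ) ψ with hw2def
    have hwcond : ∀ i, w1 i ≫ (ρ i ≫ φ) = w2 i ≫ ψ := fun i => pullback.condition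
    have hpcond : ∀ i, yoMap J hs (w1 i ≫ ρ i) ≫ yoMap J hs φ
        = yoMap J hs (w2 i) ≫ yoMap J hs ψ := by
      intro i
      rw [← yoMap_comp, ← yoMap_comp]
      congr 1
      rw [Category.assoc]
      exact hwcond i
    set p : ∀ i, yo J hs (Wi i) ⟶ pullback (yoMap J hs φ) (yoMap J hs ψ) :=
      fun i => pullback.lift (yoMap J hs (w1 i ≫ ρ i)) (yoMap J hs (w2 i)) (hpcond i)
      with hpdef
    have hpfst : ∀ i, p i ≫ pullback.fst (yoMap J hs φ) (yoMap J hs ψ)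
        = yoMap J hs (w1 i ≫ ρ i) := fun i => pullback.lift_fst _ _ _
    have hpsnd : ∀ i, p i ≫ pullback.snd (yoMap J hs φ) (yoMap J hs ψ)
        = yoMap J hs (w2 i) := fun i => pullback.lift_snd _ _ _
    -- each p i is a monomorphism
    have hmonop : ∀ i, Mono (p i) := by
      intro i
      haveI := hmonoρ i
      have hmyo : Mono (yoMap J hs (ρ i)) := mono_yoMap J hs (ρ i)
      have hPBi : IsPullback (yoMap J hs (w1 i)) (yoMap J hs (w2 i))
          (yoMap J hs (ρ i ≫ φ)) (yoMap J hs ψ) :=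
        isPullback_yoMap J hs (IsPullback.of_hasPullback _ _)
      constructor
      intro F α β hab
      have hab1 : α ≫ yoMap J hs (w1 i ≫ ρ i) = β ≫ yoMap J hs (w1 i ≫ ρ i) := by
        rw [← hpfst i, ← Category.assoc, ← Category.assoc, hab]
      have hab2 : α ≫ yoMap J hs (w2 i) = β ≫ yoMap J hs (w2 i) := by
        rw [← hpsnd i, ← Category.assoc, ← Category.assoc, hab]
      rw [yoMap_comp, ← Category.assoc, ← Category.assoc] at hab1
      have hab1' : α ≫ yoMap J hs (w1 i) = β ≫ yoMap J hs (w1 i) :=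
        (cancel_mono (yoMap J hs (ρ i))).1 hab1
      exact hPBi.hom_ext hab1' hab2
    refine ⟨I, Wi, p, ?_, ?_, ?_⟩
    · -- open immersions
      intro i X g'
      haveI := hmonop i
      constructor
      · infer_instance
      · -- build the P-family
        obtain ⟨K, Tk, τ, hcovτ, hPτ, hcartτ⟩ := hGC.locallyCartesian (ρ i) (hPρ i)
        set u : X ⟶ U := yoPreimage J hs
          (g' ≫ pullback.fst (yoMap J hs φ) (yoMap J hs ψ)) with hudef
        set v : X ⟶ U' := yoPreimage J hs
          (g' ≫ pullback.snd (yoMap J hs φ) (yoMap J hs ψ)) with hvdef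
        have hu : yoMap J hs u = g' ≫ pullback.fst (yoMap J hs φ) (yoMap J hs ψ) :=
          yoMap_yoPreimage J hs _
        have hv : yoMap J hs v = g' ≫ pullback.snd (yoMap J hs φ) (yoMap J hs ψ) :=
          yoMap_yoPreimage J hs _
        have huv : u ≫ φ = v ≫ ψ := by
          apply yoMap_injective J hs
          rw [yoMap_comp, yoMap_comp, hu, hv, Category.assoc, Category.assoc,
            pullback.condition]
        haveI : ∀ k, HasPullback (τ k ≫ ρ i) u := fun k => hcartτ k u
        set Xk : K → C := fun k => Limits.pullback (τ k ≫ ρ i) u with hXkdef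
        set x1 : ∀ k, Xk k ⟶ Tk k := fun k => pullback.fst (τ k ≫ ρ i) u with hx1def
        set σ : ∀ k, Xk k ⟶ X := fun k => pullback.snd (τ k ≫ ρ i) u with hσdef
        have hxcond : ∀ k, x1 k ≫ (τ k ≫ ρ i) = σ k ≫ u := fun k => pullback.condition
        have hPσ : ∀ k, P (σ k) := by
          intro k
          exact hGC.stableUnderBaseChange (σ k) (x1 k) u (τ k ≫ ρ i)
            (IsPullback.of_hasPullback _ _).flip
            (hGC.stableUnderComposition _ _ (hPτ k) (hPρ i))
        -- the map ℓ k : Xk k ⟶ Wi i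
        have hlcond : ∀ k, (x1 k ≫ τ k) ≫ (ρ i ≫ φ) = (σ k ≫ v) ≫ ψ := by
          intro k
          have h' := congrArg (fun z => z ≫ φ) (hxcond k)
          simp only [Category.assoc] at h' ⊢
          rw [h', huv]
        set ℓ : ∀ k, Xk k ⟶ Wi i := fun k => pullback.lift (x1 k ≫ τ k) (σ k ≫ v)
          (hlcond k) with hℓdef
        have hℓ1 : ∀ k, ℓ k ≫ w1 i = x1 k ≫ τ k := fun k => pullback.lift_fst _ _ _
        have hℓ2 : ∀ k, ℓ k ≫ w2 i = σ k ≫ v := fun k => pullback.lift_snd _ _ _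
        -- the maps m k : yo (Xk k) ⟶ pullback (p i) g'
        have hmcond : ∀ k, yoMap J hs (ℓ k) ≫ p i = yoMap J hs (σ k) ≫ g' := by
          intro k
          apply pullback.hom_ext
          · rw [Category.assoc, Category.assoc, hpfst i, ← hu, ← yoMap_comp, ← yoMap_comp]
            congr 1
            rw [← Category.assoc, hℓ1 k, Category.assoc, hxcond k]
          · rw [Category.assoc, Category.assoc, hpsnd i, ← hv, ← yoMap_comp, ← yoMap_comp]
            congr 1
            exact hℓ2 k
        set m : ∀ k, yo J hs (Xk k) ⟶ pullback (p i) g' :=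
          fun k => pullback.lift (yoMap J hs (ℓ k)) (yoMap J hs (σ k)) (hmcond k)
          with hmdef
        have hmfst : ∀ k, m k ≫ pullback.fst (p i) g' = yoMap J hs (ℓ k) :=
          fun k => pullback.lift_fst _ _ _
        have hmsnd : ∀ k, m k ≫ pullback.snd (p i) g' = yoMap J hs (σ k) :=
          fun k => pullback.lift_snd _ _ _
        -- epi of the family m
        have hepim : Epi (Sigma.desc m) := by
          apply epi_desc_of_locally_factors
          intro Y s
          set w : Y ⟶ Wi i := yoPreimage J hs (s ≫ pullback.fst (p i) g') with hwdef
          set x : Y ⟶ X := yoPreimage J hs (s ≫ pullback.snd (p i) g') with hxdef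
          have hw : yoMap J hs w = s ≫ pullback.fst (p i) g' := yoMap_yoPreimage J hs _
          have hx : yoMap J hs x = s ≫ pullback.snd (p i) g' := yoMap_yoPreimage J hs _
          have hwp : yoMap J hs w ≫ p i = yoMap J hs x ≫ g' := by
            rw [hw, hx, Category.assoc, Category.assoc, pullback.condition]
          have r1 : w ≫ w1 i ≫ ρ i = x ≫ u := by
            have e1 := congrArg (fun z => z ≫ pullback.fst (yoMap J hs φ) (yoMap J hs ψ)) hwp
            simp only [Category.assoc] at e1
            rw [hpfst i, ← hu, ← yoMap_comp, ← yoMap_comp] at e1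
            have e2 := yoMap_injective J hs e1
            simpa only [Category.assoc] using e2
          have r2 : w ≫ w2 i = x ≫ v := by
            have e1 := congrArg (fun z => z ≫ pullback.snd (yoMap J hs φ) (yoMap J hs ψ)) hwp
            simp only [Category.assoc] at e1
            rw [hpsnd i, ← hv, ← yoMap_comp, ← yoMap_comp] at e1
            exact yoMap_injective J hs e1
          refine ⟨(Sieve.generate (Presieve.ofArrows Tk τ)).pullback (w ≫ w1 i),
            J.pullback_stable _ hcovτ, ?_⟩
          intro Z t ht
          obtain ⟨k, d, hd⟩ := exists_of_generate ht
          have hncond : d ≫ (τ k ≫ ρ i) = (t ≫ x) ≫ u := by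
            have h' := congrArg (fun z => z ≫ ρ i) hd
            simp only [Category.assoc] at h' ⊢
            rw [h', r1]
          set n : Z ⟶ Xk k := pullback.lift d (t ≫ x) hncond with hndef
          have hn1 : n ≫ x1 k = d := pullback.lift_fst _ _ _
          have hn2 : n ≫ σ k = t ≫ x := pullback.lift_snd _ _ _
          refine ⟨k, n, ?_⟩
          apply pullback.hom_ext
          · rw [Category.assoc, Category.assoc, hmfst k, ← hw, ← yoMap_comp, ← yoMap_comp]
            congr 1
            apply pullback.hom_ext
            · have ha := congrArg (fun z => z ≫ τ k) hn1
              simp only [Category.assoc] at ha ⊢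
              rw [hℓ1 k, ha, hd]
            · have hb := congrArg (fun z => z ≫ v) hn2
              simp only [Category.assoc] at hb ⊢
              rw [hℓ2 k, hb, ← r2]
          · rw [Category.assoc, Category.assoc, hmsnd k, ← hx, ← yoMap_comp, hn2, yoMap_comp]
        refine ⟨K, Xk, σ, hPσ, pullback (p i) g', pullback.snd (p i) g',
          Sigma.desc m, 𝟙 _, inferInstance, hepim, inferInstance, ?_, Category.id_comp _⟩
        apply Sigma.hom_ext
        intro k
        simp only [colimit.ι_desc_assoc, Cofan.mk_ι_app, colimit.ι_desc]
        exact hmsnd k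
    · -- the atlas is epimorphic
      apply epi_desc_of_locally_factors
      intro Y s
      set y1 : Y ⟶ U := yoPreimage J hs
        (s ≫ pullback.fst (yoMap J hs φ) (yoMap J hs ψ)) with hy1def
      set y2 : Y ⟶ U' := yoPreimage J hs
        (s ≫ pullback.snd (yoMap J hs φ) (yoMap J hs ψ)) with hy2def
      have hy1 : yoMap J hs y1 = s ≫ pullback.fst (yoMap J hs φ) (yoMap J hs ψ) :=
        yoMap_yoPreimage J hs _
      have hy2 : yoMap J hs y2 = s ≫ pullback.snd (yoMap J hs φ) (yoMap J hs ψ) :=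
        yoMap_yoPreimage J hs _
      have hyy : y1 ≫ φ = y2 ≫ ψ := by
        apply yoMap_injective J hs
        rw [yoMap_comp, yoMap_comp, hy1, hy2, Category.assoc, Category.assoc,
          pullback.condition]
      refine ⟨(Sieve.generate (Presieve.ofArrows Ui ρ)).pullback y1,
        J.pullback_stable _ hcov, ?_⟩
      intro Z t ht
      obtain ⟨i, c, hc⟩ := exists_of_generate ht
      have hwcond2 : c ≫ (ρ i ≫ φ) = (t ≫ y2) ≫ ψ := by
        have h' := congrArg (fun z => z ≫ φ) hc
        simp only [Category.assoc] at h' ⊢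
        rw [h']
        have h'' := congrArg (fun z => t ≫ z) hyy
        rw [h'']
      set w : Z ⟶ Wi i := pullback.lift c (t ≫ y2) hwcond2 with hwdef
      have hwa : w ≫ w1 i = c := pullback.lift_fst _ _ _
      have hwb : w ≫ w2 i = t ≫ y2 := pullback.lift_snd _ _ _
      refine ⟨i, w, ?_⟩
      apply pullback.hom_ext
      · rw [Category.assoc, Category.assoc, hpfst i, ← hy1, ← yoMap_comp, ← yoMap_comp]
        congr 1
        have ha := congrArg (fun z => z ≫ ρ i) hwa
        simp only [Category.assoc] at ha ⊢
        rw [ha, hc]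
      · rw [Category.assoc, Category.assoc, hpsnd i, ← hy2, ← yoMap_comp, hwb, yoMap_comp]
    · -- the composites lie in S
      intro i
      refine ⟨w2 i, (hpsnd i).symm, ?_⟩
      exact h1 (w2 i) (w1 i) ψ (ρ i ≫ φ) (IsPullback.of_hasPullback _ _).flip (hSρφ i)
  · -- backward direction
    intro hSM
    obtain ⟨I, Ui, p, hOI, hEpi, hρ⟩ := hSM V (𝟙 (yo J hs V))
    choose r hr1 hr2 using hρ
    have hPBid : IsPullback (𝟙 (yo J hs U)) (yoMap J hs φ) (yoMap J hs φ) (𝟙 (yo J hs V)) :=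
      IsPullback.of_horiz_isIso ⟨by simp⟩
    set e := hPBid.isoPullback with hedef
    have he1 : e.hom ≫ pullback.fst (yoMap J hs φ) (𝟙 (yo J hs V)) = 𝟙 _ :=
      hPBid.isoPullback_hom_fst
    have he2 : e.hom ≫ pullback.snd (yoMap J hs φ) (𝟙 (yo J hs V)) = yoMap J hs φ :=
      hPBid.isoPullback_hom_snd
    have hfst : pullback.fst (yoMap J hs φ) (𝟙 (yo J hs V)) = e.inv := by
      rw [← Category.id_comp (pullback.fst (yoMap J hs φ) (𝟙 (yo J hs V))), ← e.inv_hom_id,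
        Category.assoc, he1, Category.comp_id]
    set σ : ∀ i, Ui i ⟶ U := fun i =>
      yoPreimage J hs (p i ≫ pullback.fst (yoMap J hs φ) (𝟙 (yo J hs V))) with hσdef
    have hσ : ∀ i, yoMap J hs (σ i) = p i ≫ pullback.fst (yoMap J hs φ) (𝟙 (yo J hs V)) :=
      fun i => yoMap_yoPreimage J hs _
    have hσφ : ∀ i, σ i ≫ φ = r i := by
      intro i
      apply yoMap_injective J hs
      rw [yoMap_comp, hσ i, hr1 i, Category.assoc, pullback.condition, Category.comp_id]
    -- (σ i) is a J-covering
    have hcovσ : IsJCover J Ui σ := by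
      apply isJCover_of_epi_desc
      have hdesc : Sigma.desc (fun i => yoMap J hs (σ i))
          = Sigma.desc p ≫ pullback.fst (yoMap J hs φ) (𝟙 (yo J hs V)) := by
        apply Sigma.hom_ext
        intro i
        rw [colimit.ι_desc]
        simp only [Cofan.mk_ι_app]
        rw [← Category.assoc, colimit.ι_desc]
        simp only [Cofan.mk_ι_app]
        exact hσ i
      rw [hdesc, hfst]
      exact epi_comp _ _
    -- each σ i lies in P
    have hPσ : ∀ i, P (σ i) := by
      intro i
      obtain ⟨hmono_pb, K, Vk, τ, hPτ, W', mW, pW, qW, hMonoW, hEpiP, hEpiQ, hpm, hqm⟩ :=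
        hOI i U e.hom
      have hpeq : yoMap J hs (σ i) ≫ e.hom = p i := by
        rw [hσ i, hfst, Category.assoc, e.inv_hom_id, Category.comp_id]
      have hPBi : IsPullback (𝟙 (yo J hs (Ui i))) (yoMap J hs (σ i)) (p i) e.hom :=
        IsPullback.of_horiz_isIso ⟨by rw [Category.id_comp, hpeq]⟩
      have heP1 : hPBi.isoPullback.hom ≫ pullback.fst (p i) e.hom = 𝟙 _ :=
        hPBi.isoPullback_hom_fst
      have heP2 : hPBi.isoPullback.hom ≫ pullback.snd (p i) e.hom = yoMap J hs (σ i) :=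
        hPBi.isoPullback_hom_snd
      set q' : yo J hs (Ui i) ⟶ W' := hPBi.isoPullback.hom ≫ qW with hq'def
      have hq'm : q' ≫ mW = yoMap J hs (σ i) := by
        rw [Category.assoc, hqm, heP2]
      haveI : Mono mW := hMonoW
      haveI : Epi pW := hEpiP
      haveI : Epi qW := hEpiQ
      have hmonoσyo : Mono (yoMap J hs (σ i)) := by
        rw [← heP2]
        haveI := hmono_pb
        exact mono_comp _ _
      have hmonoσ : Mono (σ i) := by
        constructor
        intro Z' a b hab
        apply yoMap_injective J hs
        have : yoMap J hs a ≫ yoMap J hs (σ i) = yoMap J hs b ≫ yoMap J hs (σ i) := by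
          rw [← yoMap_comp, ← yoMap_comp, hab]
        exact (cancel_mono (yoMap J hs (σ i))).1 this
      haveI hEpiq' : Epi q' := epi_comp _ _
      haveI hMonoq' : Mono q' := by
        have : Mono (q' ≫ mW) := by rw [hq'm]; exact hmonoσyo
        exact mono_of_mono q' mW
      haveI hIsoq' : IsIso q' := isIso_of_mono_of_epi q'
      set c : ∀ k, Vk k ⟶ Ui i := fun k =>
        yoPreimage J hs (Sigma.ι (fun k => yo J hs (Vk k)) k ≫ pW ≫ inv q') with hcdef
      have hc : ∀ k, yoMap J hs (c k)
          = Sigma.ι (fun k => yo J hs (Vk k)) k ≫ pW ≫ inv q' :=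
        fun k => yoMap_yoPreimage J hs _
      have hcσ : ∀ k, c k ≫ σ i = τ k := by
        intro k
        apply yoMap_injective J hs
        rw [yoMap_comp, hc k, ← hq'm]
        simp only [Category.assoc, IsIso.inv_hom_id_assoc]
        rw [hpm, colimit.ι_desc]
        rfl
      have hPc : ∀ k, P (c k) := by
        intro k
        have hpb := isPullback_of_comp_mono (c k) (σ i) hmonoσ
        rw [hcσ k] at hpb
        exact hGC.stableUnderBaseChange (c k) (𝟙 _) (σ i) (τ k) hpb (hPτ k)
      have hcovc : IsJCover J Vk c := by
        apply isJCover_of_epi_desc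
        have hdesc : Sigma.desc (fun k => yoMap J hs (c k)) = pW ≫ inv q' := by
          apply Sigma.hom_ext
          intro k
          rw [colimit.ι_desc]
          simp only [Cofan.mk_ι_app]
          exact hc k
        rw [hdesc]
        exact epi_comp _ _
      exact hGC.jLocal (σ i) Vk c hcovc hPc (fun k => by rw [hcσ k]; exact hPτ k)
    exact h2 φ Ui σ hcovσ hPσ (fun i => by rw [hσφ i]; exact hr2 i)
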